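/- For any u, v ∈ ℝ³ with ‖u‖ < π and ‖v‖ < π, if exp(u^∧) = exp(v^∧) then u = v; that is, the exponential map of SO(3) is injective on the open ball of radius π in ℝ³. -/

import Mathlib

/-!
Since `(u^∧)³ = -θ² u^∧` with `θ = ‖u‖`, the exponential series collapses to Rodrigues' formula
`exp u^∧ = 1 + (sin θ / θ) u^∧ + ((1 - cos θ) / θ²) (u^∧)²`. Its trace `1 + 2 cos θ` determines
`θ ∈ [0, π)`, and its antisymmetric part `2 (sin θ / θ) u^∧` then determines `u^∧`, hence `u`,
because `sin θ > 0` on `(0, π)`.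
-/

open Matrix

noncomputable section

/-- The `hat` map sending `u ∈ ℝ³` to the skew-symmetric matrix `u^∧` with `u^∧ v = u × v`. -/
def hat (u : EuclideanSpace ℝ (Fin 3)) : Matrix (Fin 3) (Fin 3) ℝ :=
  !![0, -u 2, u 1; u 2, 0, -u 0; -u 1, u 0, 0]

/-- `R ∈ SO(3)`: real 3×3 matrices with `RᵀR = I` and `det R = 1`. -/
def SO3 (R : Matrix (Fin 3) (Fin 3) ℝ) : Prop := Rᵀ * R = 1 ∧ R.det = 1

open Real
open scoped Nat

section PowThree

variable {S R : Type*} [CommSemiring S] [Semiring R] [Algebra S R] {A : R} {c : S}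

theorem pow_two_mul_add_one_of_pow_three (h : A ^ 3 = c • A) (k : ℕ) :
    A ^ (2 * k + 1) = c ^ k • A := by
  induction k with
  | zero => simp
  | succ k ih =>
    rw [show 2 * (k + 1) + 1 = 2 + (2 * k + 1) by ring, pow_add, ih, mul_smul_comm,
      ← pow_succ, h, smul_smul, ← pow_succ]

theorem pow_two_mul_add_two_of_pow_three (h : A ^ 3 = c • A) (k : ℕ) :
    A ^ (2 * k + 2) = c ^ k • A ^ 2 := by
  rw [pow_succ, pow_two_mul_add_one_of_pow_three h, smul_mul_assoc, ← pow_two]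

end PowThree

theorem Real.hasSum_sin_div {θ : ℝ} (hθ : θ ≠ 0) :
    HasSum (fun k : ℕ => (-θ ^ 2) ^ k / (2 * k + 1)!) (sin θ / θ) := by
  convert! (Real.hasSum_sin θ).div_const θ using 2 with k
  rw [neg_pow, ← pow_mul, pow_succ]
  field_simp

theorem Real.hasSum_one_sub_cos_div {θ : ℝ} (hθ : θ ≠ 0) :
    HasSum (fun k : ℕ => (-θ ^ 2) ^ k / (2 * k + 2)!) ((1 - cos θ) / θ ^ 2) := by
  have h := ((hasSum_nat_add_iff' 1).mpr (Real.hasSum_cos θ)).neg.div_const (θ ^ 2)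
  convert! h using 2 with k
  · rw [neg_pow, ← pow_mul, pow_succ (-1 : ℝ), show 2 * (k + 1) = 2 * k + 2 by ring, pow_add]
    field_simp
  · simp

theorem NormedSpace.exp_eq_of_pow_three {𝔸 : Type*} [NormedRing 𝔸] [NormedAlgebra ℝ 𝔸]
    [CompleteSpace 𝔸] {A : 𝔸} {θ : ℝ} (hθ : θ ≠ 0) (hA : A ^ 3 = (-θ ^ 2) • A) :
    NormedSpace.exp A = 1 + (sin θ / θ) • A + ((1 - cos θ) / θ ^ 2) • A ^ 2 := by
  have hodd : HasSum (fun k : ℕ => ((2 * k + 1)! : ℝ)⁻¹ • A ^ (2 * k + 1))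
      ((sin θ / θ) • A) := by
    convert (hasSum_sin_div hθ).smul_const A using 2 with k
    rw [pow_two_mul_add_one_of_pow_three hA, smul_smul, inv_mul_eq_div]
  have heven : HasSum (fun k : ℕ => ((2 * k + 2)! : ℝ)⁻¹ • A ^ (2 * k + 2))
      (((1 - cos θ) / θ ^ 2) • A ^ 2) := by
    convert (hasSum_one_sub_cos_div hθ).smul_const (A ^ 2) using 2 with k
    rw [pow_two_mul_add_two_of_pow_three hA, smul_smul, inv_mul_eq_div]
  have hseries : HasSum (fun n : ℕ => ((n + 1)! : ℝ)⁻¹ • A ^ (n + 1))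
      ((sin θ / θ) • A + ((1 - cos θ) / θ ^ 2) • A ^ 2) :=
    hodd.even_add_odd heven
  have hexp := hseries.zero_add (f := fun n : ℕ => (n ! : ℝ)⁻¹ • A ^ n)
  rw [(NormedSpace.exp_series_hasSum_exp' (𝕂 := ℝ) A).unique hexp, add_assoc]
  simp

theorem EuclideanSpace.norm_sq_fin_three (u : EuclideanSpace ℝ (Fin 3)) :
    ‖u‖ ^ 2 = u 0 ^ 2 + u 1 ^ 2 + u 2 ^ 2 := by
  simp [EuclideanSpace.norm_sq_eq, Fin.sum_univ_three]

theorem hat_zero : hat 0 = 0 := by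
  ext i j
  fin_cases i <;> fin_cases j <;> simp [hat]

theorem hat_injective : Function.Injective hat := by
  intro u v h
  have h0 := congrFun (congrFun h 2) 1
  have h1 := congrFun (congrFun h 0) 2
  have h2 := congrFun (congrFun h 1) 0
  simp only [hat, of_apply, cons_val, cons_val_zero, cons_val_one] at h0 h1 h2
  ext i
  fin_cases i <;> assumption

theorem transpose_hat (u : EuclideanSpace ℝ (Fin 3)) : (hat u)ᵀ = -hat u := by
  ext i j
  fin_cases i <;> fin_cases j <;> simp [hat]

theorem hat_pow_three (u : EuclideanSpace ℝ (Fin 3)) : hat u ^ 3 = (-‖u‖ ^ 2) • hat u := by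
  rw [EuclideanSpace.norm_sq_fin_three, pow_succ, sq]
  ext i j
  fin_cases i <;> fin_cases j <;> simp [hat, mul_apply, Fin.sum_univ_three] <;> ring

theorem trace_hat (u : EuclideanSpace ℝ (Fin 3)) : (hat u).trace = 0 := by
  simp [hat, trace_fin_three]

theorem trace_hat_sq (u : EuclideanSpace ℝ (Fin 3)) : (hat u ^ 2).trace = -2 * ‖u‖ ^ 2 := by
  rw [EuclideanSpace.norm_sq_fin_three, sq (hat u), hat, mul_fin_three, trace_fin_three]
  simp only [of_apply, cons_val', cons_val_zero, cons_val_fin_one, cons_val_one, cons_val]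
  ring

theorem exp_hat (u : EuclideanSpace ℝ (Fin 3)) :
    NormedSpace.exp (hat u) =
      1 + (sin ‖u‖ / ‖u‖) • hat u + ((1 - cos ‖u‖) / ‖u‖ ^ 2) • hat u ^ 2 := by
  rcases eq_or_ne u 0 with rfl | hu
  · simp [hat_zero]
  open scoped Norms.Operator in
  exact NormedSpace.exp_eq_of_pow_three (norm_ne_zero_iff.mpr hu) (hat_pow_three u)

theorem trace_exp_hat (u : EuclideanSpace ℝ (Fin 3)) :
    (NormedSpace.exp (hat u)).trace = 1 + 2 * cos ‖u‖ := by
  rw [exp_hat, trace_add, trace_add, trace_smul, trace_smul, trace_hat, trace_hat_sq, trace_one,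
    Fintype.card_fin]
  rcases eq_or_ne ‖u‖ 0 with h0 | h0
  · norm_num [h0]
  · simp only [smul_eq_mul, Nat.cast_ofNat]
    field_simp
    ring

theorem exp_hat_sub_transpose (u : EuclideanSpace ℝ (Fin 3)) :
    NormedSpace.exp (hat u) - (NormedSpace.exp (hat u))ᵀ = (2 * (sin ‖u‖ / ‖u‖)) • hat u := by
  rw [exp_hat, transpose_add, transpose_add, transpose_smul, transpose_smul, transpose_one,
    transpose_pow, transpose_hat, neg_sq]
  module

/-- The exponential map of `SO(3)` is injective on the open ball of radius `π` in `ℝ³`. -/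
theorem so3_exp_injOn_ball (u v : EuclideanSpace ℝ (Fin 3))
    (hu : ‖u‖ < Real.pi) (hv : ‖v‖ < Real.pi)
    (h : NormedSpace.exp (hat u) = NormedSpace.exp (hat v)) : u = v := by
  have hnorm : ‖u‖ = ‖v‖ := by
    refine injOn_cos ⟨norm_nonneg u, hu.le⟩ ⟨norm_nonneg v, hv.le⟩ ?_
    linarith [trace_exp_hat u, trace_exp_hat v, congrArg trace h]
  have hscaled : (2 * (sin ‖u‖ / ‖u‖)) • hat u = (2 * (sin ‖u‖ / ‖u‖)) • hat v := by
    rw [← exp_hat_sub_transpose, h, exp_hat_sub_transpose, hnorm]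
  rcases (norm_nonneg u).eq_or_lt with hu0 | hupos
  · rw [norm_eq_zero.mp hu0.symm, norm_eq_zero.mp (hnorm.symm.trans hu0.symm)]
  · have hsin := sin_pos_of_pos_of_lt_pi hupos hu
    exact hat_injective (smul_right_injective _ (by positivity) hscaled)
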